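/- arXiv:2207.03275 — 6 statements merged into one kernel-verified Lean document; each statement's English description precedes it below -/
import Mathlib

section
/- If σ and σ' are two finite sequences of full doubling operations (each operation being an east full doubling D_E or a north full doubling D_N) that contain the same number of east operations and the same number of north operations, then applying σ and applying σ' to the same shape S yield the same final shape; i.e., the result of a sequence of full doubling operations depends only on the number of horizontal and vertical operations and not on their order. -/
/-- Minimum first coordinate of a shape (0 for the empty set). -/
def xmin (S : Finset (ℤ × ℤ)) : ℤ := WithTop.untopD 0 ((S.image Prod.fst).min)

/-- Minimum second coordinate of a shape (0 for the empty set). -/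
def ymin (S : Finset (ℤ × ℤ)) : ℤ := WithTop.untopD 0 ((S.image Prod.snd).min)

/-- East full doubling. -/
def DE (S : Finset (ℤ × ℤ)) : Finset (ℤ × ℤ) :=
  S.image (fun p => (2 * p.1 - xmin S, p.2)) ∪
    S.image (fun p => (2 * p.1 - xmin S + 1, p.2))

/-- North full doubling. -/
def DN (S : Finset (ℤ × ℤ)) : Finset (ℤ × ℤ) :=
  S.image (fun p => (p.1, 2 * p.2 - ymin S)) ∪
    S.image (fun p => (p.1, 2 * p.2 - ymin S + 1))

/-- Apply a sequence of full doubling operations (`true` = east, `false` = north),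
in order (head of the list first). -/
def applySeq (σ : List Bool) (S : Finset (ℤ × ℤ)) : Finset (ℤ × ℤ) :=
  σ.foldl (fun T b => if b then DE T else DN T) S

/-- The (p,q)-rectangle around an integer point. -/
noncomputable def Rec2 (u : ℤ × ℤ) (p q : ℕ) : Finset (ℤ × ℤ) :=
  Finset.Icc u.1 (u.1 + (p : ℤ) - 1) ×ˢ Finset.Icc u.2 (u.2 + (q : ℤ) - 1)

/-- The reconfiguration function `F_{l,k}`. -/
noncomputable def F (l k : ℕ) (S : Finset (ℤ × ℤ)) : Finset (ℤ × ℤ) :=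
  S.biUnion fun p =>
    Rec2 (p.1 + ((2 : ℤ) ^ l - 1) * (p.1 - xmin S),
          p.2 + ((2 : ℤ) ^ k - 1) * (p.2 - ymin S)) (2 ^ l) (2 ^ k)

/-- Two grid points are adjacent if they are at orthogonal distance 1. -/
def Adj (u v : ℤ × ℤ) : Prop := (u.1 - v.1).natAbs + (u.2 - v.2).natAbs = 1

/-- A shape is connected if any two of its points are joined by a path of
adjacent points inside the shape. -/
def ShapeConnected (S : Finset (ℤ × ℤ)) : Prop :=
  ∀ u ∈ S, ∀ v ∈ S,
    Relation.ReflTransGen (fun a b => a ∈ S ∧ b ∈ S ∧ Adj a b) u v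

/-- `wD D x` is the number of elements of `D` strictly west of `x`. -/
def wD (D : Finset ℤ) (x : ℤ) : ℕ := (D.filter (· < x)).card

/-- East RC doubling of `S` with doubled column set `D`. -/
def RCE (S : Finset (ℤ × ℤ)) (D : Finset ℤ) : Finset (ℤ × ℤ) :=
  S.image (fun p => (p.1 + (wD D p.1 : ℤ), p.2)) ∪
    (S.filter fun p => p.1 ∈ D).image fun p => (p.1 + (wD D p.1 : ℤ) + 1, p.2)

/-- North RC doubling of `S` with doubled row set `D`. -/
def RCN (S : Finset (ℤ × ℤ)) (D : Finset ℤ) : Finset (ℤ × ℤ) :=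
  S.image (fun p => (p.1, p.2 + (wD D p.2 : ℤ))) ∪
    (S.filter fun p => p.2 ∈ D).image fun p => (p.1, p.2 + (wD D p.2 : ℤ) + 1)

/-- `D` is an admissible doubled column set for `S`. -/
def eastAdmissible (S : Finset (ℤ × ℤ)) (D : Finset ℤ) : Prop :=
  D.Nonempty ∧ ∀ d ∈ D, ∃ y, (d, y) ∈ S

/-- `D` is an admissible doubled row set for `S`. -/
def northAdmissible (S : Finset (ℤ × ℤ)) (D : Finset ℤ) : Prop :=
  D.Nonempty ∧ ∀ d ∈ D, ∃ x, (x, d) ∈ S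

/-- One east or north RC doubling step. -/
def RCStep (S T : Finset (ℤ × ℤ)) : Prop :=
  ∃ D : Finset ℤ,
    (eastAdmissible S D ∧ T = RCE S D) ∨ (northAdmissible S D ∧ T = RCN S D)

/-- One single column or single row doubling step (an RC step with `|D| = 1`). -/
def SingleStep (S T : Finset (ℤ × ℤ)) : Prop :=
  ∃ D : Finset ℤ, D.card = 1 ∧
    ((eastAdmissible S D ∧ T = RCE S D) ∨ (northAdmissible S D ∧ T = RCN S D))

/-- Translate a shape by a vector. -/
def translateSh (v : ℤ × ℤ) (S : Finset (ℤ × ℤ)) : Finset (ℤ × ℤ) :=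
  S.image fun p => (p.1 + v.1, p.2 + v.2)

/-- Single east column doubling at column `d`. -/
def oE (d : ℤ) (T : Finset (ℤ × ℤ)) : Finset (ℤ × ℤ) :=
  (T.filter fun p => p.1 ≤ d) ∪ (T.filter fun p => d ≤ p.1).image fun p => (p.1 + 1, p.2)

/-- The column of `S` at `x`. -/
def colS (S : Finset (ℤ × ℤ)) (x : ℤ) : Finset ℤ := (S.filter fun p => p.1 = x).image Prod.snd

/-- The row of `S` at `y`. -/
def rowS (S : Finset (ℤ × ℤ)) (y : ℤ) : Finset ℤ := (S.filter fun p => p.2 = y).image Prod.fst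

/-- `phiC S x` counts the column changes of `S` in the interval `(xmin S, x]`. -/
noncomputable def phiC (S : Finset (ℤ × ℤ)) (x : ℤ) : ℕ :=
  ((Finset.Icc (xmin S + 1) x).filter fun x' => colS S x' ≠ colS S (x' - 1)).card

/-- `phiR S y` counts the row changes of `S` in the interval `(ymin S, y]`. -/
noncomputable def phiR (S : Finset (ℤ × ℤ)) (y : ℤ) : ℕ :=
  ((Finset.Icc (ymin S + 1) y).filter fun y' => rowS S y' ≠ rowS S (y' - 1)).card

/-- Column compression of a shape. -/
noncomputable def KC (S : Finset (ℤ × ℤ)) : Finset (ℤ × ℤ) := S.image fun p => ((phiC S p.1 : ℤ), p.2)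

/-- Row compression of a shape. -/
noncomputable def KR (S : Finset (ℤ × ℤ)) : Finset (ℤ × ℤ) := S.image fun p => (p.1, (phiR S p.2 : ℤ))

/-- The baseline shape of `S`. -/
noncomputable def Baseline (S : Finset (ℤ × ℤ)) : Finset (ℤ × ℤ) := KR (KC S)

/-- Number of distinct consecutive columns of `S`. -/
noncomputable def mC (S : Finset (ℤ × ℤ)) : ℕ := (S.image Prod.fst).sup (phiC S) + 1

/-- Number of distinct consecutive rows of `S`. -/
noncomputable def mR (S : Finset (ℤ × ℤ)) : ℕ := (S.image Prod.snd).sup (phiR S) + 1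

/-- Consecutive multiplicity of the `i`-th distinct column of `S`. -/
noncomputable def MC (S : Finset (ℤ × ℤ)) (i : ℕ) : ℕ := ((S.image Prod.fst).filter fun x => phiC S x = i).card

/-- Consecutive multiplicity of the `i`-th distinct row of `S`. -/
noncomputable def MR (S : Finset (ℤ × ℤ)) (i : ℕ) : ℕ := ((S.image Prod.snd).filter fun y => phiR S y = i).card

/-- The four unit directions. -/
def dirs : Finset (ℤ × ℤ) := {(1, 0), (-1, 0), (0, 1), (0, -1)}

/-- One node-addition growth step: a direction `d` is fixed and every new node is
generated at a position `p + d` for an existing node `p`. -/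
def AddStep (S T : Finset (ℤ × ℤ)) : Prop :=
  ∃ d ∈ dirs, S ⊆ T ∧ T ⊆ S ∪ S.image (fun p => (p.1 + d.1, p.2 + d.2))

/-! The full doublings are inverse images of halving maps: `(x, y) ∈ D_E S` iff
`(⌊(x + xmin S) / 2⌋, y) ∈ S`, and similarly for `D_N`. Since `D_E` leaves `ymin` unchanged
and `D_N` leaves `xmin` unchanged, both `D_E ∘ D_N` and `D_N ∘ D_E` are the inverse image
under the same map, so east and north doublings commute and any reordering of a sequence
gives the same shape. -/

lemma mem_DE {S : Finset (ℤ × ℤ)} {p : ℤ × ℤ} :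
    p ∈ DE S ↔ ((p.1 + xmin S) / 2, p.2) ∈ S := by
  obtain ⟨x, y⟩ := p
  simp only [DE, Finset.mem_union, Finset.mem_image, Prod.exists, Prod.mk.injEq]
  constructor
  · rintro (⟨a, b, h, rfl, rfl⟩ | ⟨a, b, h, rfl, rfl⟩) <;> convert h using 2 <;> omega
  · intro h
    rcases Int.emod_two_eq_zero_or_one (x + xmin S) with hx | hx
    · exact Or.inl ⟨_, _, h, by omega, rfl⟩
    · exact Or.inr ⟨_, _, h, by omega, rfl⟩

lemma mem_DN {S : Finset (ℤ × ℤ)} {p : ℤ × ℤ} :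
    p ∈ DN S ↔ (p.1, (p.2 + ymin S) / 2) ∈ S := by
  obtain ⟨x, y⟩ := p
  simp only [DN, Finset.mem_union, Finset.mem_image, Prod.exists, Prod.mk.injEq]
  constructor
  · rintro (⟨a, b, h, rfl, rfl⟩ | ⟨a, b, h, rfl, rfl⟩) <;> convert h using 2 <;> omega
  · intro h
    rcases Int.emod_two_eq_zero_or_one (y + ymin S) with hy | hy
    · exact Or.inl ⟨_, _, h, rfl, by omega⟩
    · exact Or.inr ⟨_, _, h, rfl, by omega⟩

lemma xmin_DN (S : Finset (ℤ × ℤ)) : xmin (DN S) = xmin S := by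
  simp only [xmin, DN, Finset.image_union, Finset.image_image, Function.comp_def,
    Finset.union_self]

lemma ymin_DE (S : Finset (ℤ × ℤ)) : ymin (DE S) = ymin S := by
  simp only [ymin, DE, Finset.image_union, Finset.image_image, Function.comp_def,
    Finset.union_self]

lemma DE_DN_comm (S : Finset (ℤ × ℤ)) : DE (DN S) = DN (DE S) := by
  ext p
  rw [mem_DE, mem_DN, xmin_DN, mem_DN, mem_DE, ymin_DE]

theorem full_doubling_order_independent_general (S : Finset (ℤ × ℤ))
    (σ σ' : List Bool)
    (ht : σ.count true = σ'.count true) (hf : σ.count false = σ'.count false) :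
    applySeq σ S = applySeq σ' S := by
  have hperm : σ.Perm σ' := List.perm_iff_count.2 fun
    | true => ht
    | false => hf
  exact hperm.foldl_eq' (fun b _ c _ T => by cases b <;> cases c <;> simp [DE_DN_comm]) S

/-- the result of a sequence of full doubling operations depends only on
the number of east and north operations, not on their order. -/
theorem full_doubling_order_independent (S : Finset (ℤ × ℤ)) (hS : S.Nonempty)
    (σ σ' : List Bool)
    (ht : σ.count true = σ'.count true) (hf : σ.count false = σ'.count false) :
    applySeq σ S = applySeq σ' S :=
  full_doubling_order_independent_general S σ σ' ht hf
end

section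
/- For every shape S and all natural numbers l, k, the rectangles Rec((x + (2^l − 1)(x − xmin(S)), y + (2^k − 1)(y − ymin(S))), 2^l, 2^k) associated with distinct points (x,y) ∈ S are pairwise disjoint; consequently |F_{l,k}(S)| = 2^{l+k} · |S|. -/
theorem Rec2_card (u : ℤ × ℤ) (p q : ℕ) : (Rec2 u p q).card = p * q := by
  simp only [Rec2, Finset.card_product, Int.card_Icc]
  congr 1 <;> omega

theorem Rec2_disjoint {u v : ℤ × ℤ} {p q : ℕ}
    (h : (p : ℤ) ≤ |u.1 - v.1| ∨ (q : ℤ) ≤ |u.2 - v.2|) :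
    Disjoint (Rec2 u p q) (Rec2 v p q) := by
  rw [Finset.disjoint_left]
  intro z hzu hzv
  simp only [Rec2, Finset.mem_product, Finset.mem_Icc] at hzu hzv
  rcases h with h | h <;> rw [le_abs'] at h <;> omega

/-- Stretching by the factor `M` about `m` multiplies distances by `M`, so distinct integers
end up at least `M` apart. -/
theorem le_abs_sub_stretch {M : ℤ} (hM : 0 ≤ M) (m : ℤ) {a b : ℤ} (hab : a ≠ b) :
    M ≤ |a + (M - 1) * (a - m) - (b + (M - 1) * (b - m))| := by
  rw [show a + (M - 1) * (a - m) - (b + (M - 1) * (b - m)) = M * (a - b) by ring,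
    abs_mul, abs_of_nonneg hM]
  exact le_mul_of_one_le_right hM (Int.one_le_abs (sub_ne_zero.mpr hab))

theorem F_rectangles_disjoint_card_general (S : Finset (ℤ × ℤ)) (l k : ℕ) :
    (∀ p ∈ S, ∀ q ∈ S, p ≠ q →
      Disjoint
        (Rec2 (p.1 + ((2 : ℤ) ^ l - 1) * (p.1 - xmin S),
               p.2 + ((2 : ℤ) ^ k - 1) * (p.2 - ymin S)) (2 ^ l) (2 ^ k))
        (Rec2 (q.1 + ((2 : ℤ) ^ l - 1) * (q.1 - xmin S),
               q.2 + ((2 : ℤ) ^ k - 1) * (q.2 - ymin S)) (2 ^ l) (2 ^ k))) ∧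
    (F l k S).card = 2 ^ (l + k) * S.card := by
  have disjoint : ∀ p ∈ S, ∀ q ∈ S, p ≠ q →
      Disjoint
        (Rec2 (p.1 + ((2 : ℤ) ^ l - 1) * (p.1 - xmin S),
               p.2 + ((2 : ℤ) ^ k - 1) * (p.2 - ymin S)) (2 ^ l) (2 ^ k))
        (Rec2 (q.1 + ((2 : ℤ) ^ l - 1) * (q.1 - xmin S),
               q.2 + ((2 : ℤ) ^ k - 1) * (q.2 - ymin S)) (2 ^ l) (2 ^ k)) := by
    intro p _ q _ hpq
    apply Rec2_disjoint
    push_cast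
    rw [Ne, Prod.ext_iff, not_and_or] at hpq
    exact hpq.imp (le_abs_sub_stretch (by positivity) _) (le_abs_sub_stretch (by positivity) _)
  refine ⟨disjoint, ?_⟩
  rw [F, Finset.card_biUnion disjoint, Finset.sum_congr rfl fun p _ => Rec2_card _ _ _,
    Finset.sum_const, smul_eq_mul, pow_add, mul_comm]

/-- the rectangles of `F_{l,k}(S)` associated with distinct points of `S`
are pairwise disjoint, hence `|F_{l,k}(S)| = 2^{l+k} · |S|`. -/
theorem F_rectangles_disjoint_card (S : Finset (ℤ × ℤ)) (hS : S.Nonempty) (l k : ℕ) :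
    (∀ p ∈ S, ∀ q ∈ S, p ≠ q →
      Disjoint
        (Rec2 (p.1 + ((2 : ℤ) ^ l - 1) * (p.1 - xmin S),
               p.2 + ((2 : ℤ) ^ k - 1) * (p.2 - ymin S)) (2 ^ l) (2 ^ k))
        (Rec2 (q.1 + ((2 : ℤ) ^ l - 1) * (q.1 - xmin S),
               q.2 + ((2 : ℤ) ^ k - 1) * (q.2 - ymin S)) (2 ^ l) (2 ^ k))) ∧
    (F l k S).card = 2 ^ (l + k) * S.card :=
  F_rectangles_disjoint_card_general S l k
end

section
/- Full doubling preserves connectivity: if a shape S is connected, then the east full doubling D_E(S) and the north full doubling D_N(S) are connected; consequently, for all natural numbers l, k, the shape F_{l,k}(S) is connected. -/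
/-! `F l k S` replaces each point of `S` by a `2^l × 2^k` rectangle, and the rectangles of two
adjacent points lie side by side, so they contain adjacent cells. A union of connected pieces
indexed by a connected shape, in which adjacent indices give touching pieces, is connected.
The full doublings are the cases `F 1 0` and `F 0 1`. -/

open Finset Relation

def gridRel (T : Finset (ℤ × ℤ)) (u v : ℤ × ℤ) : Prop := u ∈ T ∧ v ∈ T ∧ Adj u v

lemma gridRel_mono {T T' : Finset (ℤ × ℤ)} (h : T ⊆ T') : gridRel T ≤ gridRel T' :=
  fun _ _ ⟨hu, hv, hadj⟩ => ⟨h hu, h hv, hadj⟩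

lemma Adj.symm {u v : ℤ × ℤ} (h : Adj u v) : Adj v u := by
  unfold Adj at *; omega

lemma adj_add_one_fst (x y : ℤ) : Adj (x, y) (x + 1, y) := by simp [Adj]

lemma adj_add_one_snd (x y : ℤ) : Adj (x, y) (x, y + 1) := by simp [Adj]

lemma Adj.eq_or {u v : ℤ × ℤ} (h : Adj u v) :
    v = (u.1 + 1, u.2) ∨ u = (v.1 + 1, v.2) ∨ v = (u.1, u.2 + 1) ∨ u = (v.1, v.2 + 1) := by
  obtain ⟨x, y⟩ := u
  obtain ⟨x', y'⟩ := v
  unfold Adj at h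
  simp only [Prod.mk.injEq] at h ⊢
  omega

lemma reflTransGen_gridRel_of_line {T : Finset (ℤ × ℤ)} (f : ℤ → ℤ × ℤ)
    (hf : ∀ i, Adj (f i) (f (i + 1))) {a b : ℤ} (hT : ∀ i ∈ Icc a b, f i ∈ T) {i j : ℤ}
    (hi : i ∈ Icc a b) (hj : j ∈ Icc a b) : ReflTransGen (gridRel T) (f i) (f j) := by
  refine ReflTransGen.lift f (r := fun i j => gridRel T (f i) (f j)) (fun _ _ h => h) i j ?_
  rw [mem_Icc] at hi hj
  have mem (n : ℤ) (h₁ : a ≤ n) (h₂ : n ≤ b) : f n ∈ T := hT n (mem_Icc.2 ⟨h₁, h₂⟩)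
  refine reflTransGen_of_succ _ (fun n hn => ?_) (fun n hn => ?_) <;>
    rw [Set.mem_Ico] at hn <;> rw [Order.succ_eq_add_one]
  · exact ⟨mem n (by omega) (by omega), mem (n + 1) (by omega) (by omega), hf n⟩
  · exact ⟨mem (n + 1) (by omega) (by omega), mem n (by omega) (by omega), (hf n).symm⟩

lemma shapeConnected_Rec2 (w : ℤ × ℤ) (p q : ℕ) : ShapeConnected (Rec2 w p q) := by
  rintro ⟨x₁, y₁⟩ hu ⟨x₂, y₂⟩ hv
  rw [Rec2, mem_product] at hu hv
  have horizontal : ReflTransGen (gridRel (Rec2 w p q)) (x₁, y₁) (x₂, y₁) :=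
    reflTransGen_gridRel_of_line (fun x => (x, y₁)) (fun x => adj_add_one_fst x y₁)
      (fun _ hx => mem_product.2 ⟨hx, hu.2⟩) hu.1 hv.1
  have vertical : ReflTransGen (gridRel (Rec2 w p q)) (x₂, y₁) (x₂, y₂) :=
    reflTransGen_gridRel_of_line (fun y => (x₂, y)) (fun y => adj_add_one_snd x₂ y)
      (fun _ hy => mem_product.2 ⟨hv.1, hy⟩) hu.2 hv.2
  exact horizontal.trans vertical

theorem ShapeConnected.biUnion {S : Finset (ℤ × ℤ)} (hS : ShapeConnected S)
    {B : ℤ × ℤ → Finset (ℤ × ℤ)} (hB : ∀ p ∈ S, ShapeConnected (B p))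
    (hadj : ∀ p ∈ S, ∀ q ∈ S, Adj p q → ∃ u ∈ B p, ∃ v ∈ B q, Adj u v) :
    ShapeConnected (S.biUnion B) := by
  have within : ∀ p ∈ S, ∀ u ∈ B p, ∀ v ∈ B p, ReflTransGen (gridRel (S.biUnion B)) u v :=
    fun p hp u hu v hv =>
      ReflTransGen.mono (gridRel_mono (subset_biUnion_of_mem B hp)) _ _ (hB p hp u hu v hv)
  intro u hu v hv
  obtain ⟨p, hp, hup⟩ := mem_biUnion.1 hu
  obtain ⟨r, hr, hvr⟩ := mem_biUnion.1 hv
  suffices ∀ r, ReflTransGen (gridRel S) p r → ∀ v ∈ B r, ReflTransGen (gridRel (S.biUnion B)) u v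
    from this r (hS p hp r hr) v hvr
  intro r hpr
  induction hpr with
  | refl => exact within p hp u hup
  | tail _ hqr ih =>
    obtain ⟨hq, hr, hqr⟩ := hqr
    obtain ⟨u', hu', v', hv', hu'v'⟩ := hadj _ hq _ hr hqr
    intro v hv
    exact ((ih u' hu').tail ⟨mem_biUnion.2 ⟨_, hq, hu'⟩, mem_biUnion.2 ⟨_, hr, hv'⟩, hu'v'⟩).trans
      (within _ hr v' hv' v hv)

/-- The cell of `p` when each lattice point is blown up to an `a × b` rectangle, shifted by `c`. -/
noncomputable def scaledCell (a b : ℕ) (c p : ℤ × ℤ) : Finset (ℤ × ℤ) :=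
  Rec2 (a * p.1 + c.1, b * p.2 + c.2) a b

lemma exists_adj_scaledCell {a b : ℕ} (ha : 0 < a) (hb : 0 < b) (c : ℤ × ℤ) {p q : ℤ × ℤ}
    (h : Adj p q) : ∃ u ∈ scaledCell a b c p, ∃ v ∈ scaledCell a b c q, Adj u v := by
  have east (x y : ℤ) :
      ∃ u ∈ scaledCell a b c (x, y), ∃ v ∈ scaledCell a b c (x + 1, y), Adj u v := by
    have : (a : ℤ) * (x + 1) = a * x + a := by ring
    refine ⟨(a * x + c.1 + a - 1, b * y + c.2), ?_, (a * x + c.1 + a, b * y + c.2), ?_, ?_⟩ <;>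
      simp only [scaledCell, Rec2, mem_product, mem_Icc, Adj] <;> omega
  have north (x y : ℤ) :
      ∃ u ∈ scaledCell a b c (x, y), ∃ v ∈ scaledCell a b c (x, y + 1), Adj u v := by
    have : (b : ℤ) * (y + 1) = b * y + b := by ring
    refine ⟨(a * x + c.1, b * y + c.2 + b - 1), ?_, (a * x + c.1, b * y + c.2 + b), ?_, ?_⟩ <;>
      simp only [scaledCell, Rec2, mem_product, mem_Icc, Adj] <;> omega
  have swap {p q : ℤ × ℤ} (h : ∃ u ∈ scaledCell a b c q, ∃ v ∈ scaledCell a b c p, Adj u v) :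
      ∃ u ∈ scaledCell a b c p, ∃ v ∈ scaledCell a b c q, Adj u v :=
    let ⟨u, hu, v, hv, huv⟩ := h; ⟨v, hv, u, hu, huv.symm⟩
  rcases h.eq_or with rfl | rfl | rfl | rfl
  · exact east _ _
  · exact swap (east _ _)
  · exact north _ _
  · exact swap (north _ _)

lemma F_eq_biUnion_scaledCell (l k : ℕ) (S : Finset (ℤ × ℤ)) :
    F l k S = S.biUnion (scaledCell (2 ^ l) (2 ^ k)
      (-((2 ^ l - 1) * xmin S), -((2 ^ k - 1) * ymin S))) := by
  refine biUnion_congr rfl fun p _ => ?_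
  simp only [scaledCell]
  congr 1
  ext <;> push_cast <;> ring

lemma shapeConnected_F {S : Finset (ℤ × ℤ)} (hS : ShapeConnected S) (l k : ℕ) :
    ShapeConnected (F l k S) := by
  rw [F_eq_biUnion_scaledCell]
  exact hS.biUnion (fun _ _ => shapeConnected_Rec2 _ _ _)
    fun _ _ _ _ => exists_adj_scaledCell (by positivity) (by positivity) _

lemma DE_eq_F (S : Finset (ℤ × ℤ)) : DE S = F 1 0 S := by
  ext ⟨x, y⟩
  simp only [F_eq_biUnion_scaledCell, DE, scaledCell, Rec2, mem_union, mem_image, mem_biUnion,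
    mem_product, mem_Icc, Prod.mk.injEq, Prod.exists]
  norm_num
  constructor
  · rintro (⟨a, ha, rfl⟩ | ⟨a, ha, rfl⟩) <;> exact ⟨a, y, ha, by omega, le_rfl, le_rfl⟩
  · rintro ⟨a, b, hab, hx, hby, hyb⟩
    obtain rfl : b = y := le_antisymm hby hyb
    obtain h | h : 2 * a - xmin S = x ∨ 2 * a - xmin S + 1 = x := by omega
    exacts [Or.inl ⟨a, hab, h⟩, Or.inr ⟨a, hab, h⟩]

lemma DN_eq_F (S : Finset (ℤ × ℤ)) : DN S = F 0 1 S := by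
  ext ⟨x, y⟩
  simp only [F_eq_biUnion_scaledCell, DN, scaledCell, Rec2, mem_union, mem_image, mem_biUnion,
    mem_product, mem_Icc, Prod.mk.injEq, Prod.exists]
  norm_num
  constructor
  · rintro (⟨a, b, hb, rfl, rfl⟩ | ⟨a, b, hb, rfl, rfl⟩) <;>
      exact ⟨a, b, hb, ⟨le_rfl, le_rfl⟩, by omega⟩
  · rintro ⟨a, b, hab, ⟨hax, hxa⟩, hy⟩
    obtain rfl : a = x := le_antisymm hax hxa
    obtain h | h : 2 * b - ymin S = y ∨ 2 * b - ymin S + 1 = y := by omega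
    exacts [Or.inl ⟨_, b, hab, rfl, h⟩, Or.inr ⟨_, b, hab, rfl, h⟩]

theorem full_doubling_preserves_connectivity_general (S : Finset (ℤ × ℤ))
    (hconn : ShapeConnected S) :
    ShapeConnected (DE S) ∧ ShapeConnected (DN S) ∧
      ∀ l k : ℕ, ShapeConnected (F l k S) :=
  ⟨DE_eq_F S ▸ shapeConnected_F hconn 1 0, DN_eq_F S ▸ shapeConnected_F hconn 0 1,
    shapeConnected_F hconn⟩

/-- full doubling preserves connectivity, and consequently so does every
reconfiguration function `F_{l,k}`. -/
theorem full_doubling_preserves_connectivity (S : Finset (ℤ × ℤ)) (hS : S.Nonempty)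
    (hconn : ShapeConnected S) :
    ShapeConnected (DE S) ∧ ShapeConnected (DN S) ∧
      ∀ l k : ℕ, ShapeConnected (F l k S) :=
  full_doubling_preserves_connectivity_general S hconn
end

section
/- A connected shape S_F can be obtained (up to translation) from a connected shape S_I through a finite sequence of east and north RC doubling operations if and only if all of the following hold: B(S_I) = B(S_F); m_C(S_I) = m_C(S_F) and m_R(S_I) = m_R(S_F); M_C(S_I, i) ≤ M_C(S_F, i) for every i with 0 ≤ i < m_C(S_I); and M_R(S_I, i) ≤ M_R(S_F, i) for every i with 0 ≤ i < m_R(S_I). -/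
/-!
An RC doubling copies columns (or rows) next to themselves, so it keeps the baseline and can
only raise multiplicities; the baseline also determines `m_C` and `m_R`, and all these
invariants are translation invariant. Conversely, doubling one column of the `i`-th class
raises `M_C(i)` by one and changes nothing else, so from `S_I` one first matches the column
multiplicities and then the row multiplicities of `S_F`. The shape obtained is a translate of
`S_F`: the columns of a connected shape form an interval, `φ_S(x) < i` holds exactly when
`x - xmin S < ∑_{j<i} M_C(S, j)`, and the column at `x` is the column of `K_C(S)` at `φ_S(x)`,
so baseline and multiplicities determine a connected shape up to translation.
Rows are handled by transposing the shape.
-/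

namespace RCShape

open Finset Relation

variable {S T : Finset (ℤ × ℤ)}

lemma mem_colS {x y : ℤ} : y ∈ colS S x ↔ (x, y) ∈ S := by
  simp [colS]

lemma mem_rowS {x y : ℤ} : x ∈ rowS S y ↔ (x, y) ∈ S := by
  simp [rowS]

lemma xmin_eq_min' (hS : S.Nonempty) : xmin S = (S.image Prod.fst).min' (hS.image _) := by
  rw [xmin, ← coe_min', WithTop.untopD_coe]

lemma xmin_le {x : ℤ} (hx : x ∈ S.image Prod.fst) : xmin S ≤ x := by
  rw [xmin_eq_min' (image_nonempty.1 ⟨x, hx⟩)]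
  exact min'_le _ _ hx

lemma xmin_mem_image_fst (hS : S.Nonempty) : xmin S ∈ S.image Prod.fst := by
  rw [xmin_eq_min' hS]
  exact min'_mem _ _

section ChangeCount

variable {α β : Type*} [DecidableEq α] [DecidableEq β] {c : ℤ → α} {a x y : ℤ}

noncomputable def changeCount (c : ℤ → α) (a x : ℤ) : ℕ :=
  #{x' ∈ Icc (a + 1) x | c x' ≠ c (x' - 1)}

lemma changeCount_of_le (h : x ≤ a) : changeCount c a x = 0 := by
  simp [changeCount, Icc_eq_empty_of_lt (by omega : x < a + 1)]

lemma changeCount_mono : Monotone (changeCount c a) := fun _ _ h =>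
  card_le_card (filter_subset_filter _ (Icc_subset_Icc_right h))

lemma changeCount_succ (h : a ≤ x) :
    changeCount c a (x + 1) = changeCount c a x + if c (x + 1) = c x then 0 else 1 := by
  have hIcc : Icc (a + 1) (x + 1) = insert (x + 1) (Icc (a + 1) x) := by
    ext; simp only [mem_Icc, mem_insert]; omega
  rw [changeCount, changeCount, hIcc, filter_insert, add_sub_cancel_right]
  by_cases hc : c (x + 1) = c x
  · simp [hc]
  · simp [hc, card_insert_of_notMem]

lemma changeCount_succ_le : changeCount c a (x + 1) ≤ changeCount c a x + 1 := by
  rcases le_or_gt a x with h | h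
  · rw [changeCount_succ h]; split_ifs <;> omega
  · rw [changeCount_of_le (by omega : x + 1 ≤ a)]; omega

lemma eq_of_changeCount_eq (hax : a ≤ x) (hxy : x ≤ y)
    (h : changeCount c a x = changeCount c a y) : c x = c y := by
  induction y, hxy using Int.leInduction with
  | base => rfl
  | succ y hxy ih =>
    have hmono := changeCount_mono (c := c) (a := a) hxy
    rw [changeCount_succ (hax.trans hxy)] at h
    split_ifs at h with hc
    · rw [ih (by omega), hc]
    · omega

lemma exists_changeCount_eq (hax : a ≤ x) {i : ℕ} (hi : i ≤ changeCount c a x) :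
    ∃ z, a ≤ z ∧ z ≤ x ∧ changeCount c a z = i := by
  induction x, hax using Int.leInduction generalizing i with
  | base => exact ⟨a, le_rfl, le_rfl, by rw [changeCount_of_le le_rfl] at hi ⊢; omega⟩
  | succ x hax ih =>
    rcases le_or_gt i (changeCount c a x) with hle | hlt
    · obtain ⟨z, hz⟩ := ih hle
      exact ⟨z, hz.1, by omega, hz.2.2⟩
    · have := changeCount_succ_le (c := c) (a := a) (x := x)
      exact ⟨x + 1, by omega, le_rfl, by omega⟩

lemma changeCount_congr {c' : ℤ → β} (h : ∀ x y, c x = c y ↔ c' x = c' y) :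
    changeCount c a = changeCount c' a := by
  funext x
  simp only [changeCount, ne_eq, h]

lemma changeCount_add {c' : ℤ → β} (t : ℤ)
    (h : ∀ x y, c' (x + t) = c' (y + t) ↔ c x = c y) :
    changeCount c' (a + t) (x + t) = changeCount c a x := by
  rw [changeCount, changeCount, show a + t + 1 = a + 1 + t by ring, ← map_add_right_Icc,
    filter_map, card_map]
  congr 1
  refine filter_congr fun z _ => ?_
  simp [show z + t - 1 = z - 1 + t by ring, h]

-- `f` models a column doubling: column `x` moves to `f x`, and a doubled column `x` is copied
-- to `f x + 1`.
lemma changeCount_stretch {c' : ℤ → α} {f : ℤ → ℤ} (hf : Monotone f)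
    (hc : ∀ x, c' (f x) = c x)
    (hstep : ∀ x, f (x + 1) = f x + 1 ∨ (f (x + 1) = f x + 2 ∧ c' (f x + 1) = c' (f x)))
    (hax : a ≤ x) : changeCount c' (f a) (f x) = changeCount c a x := by
  induction x, hax using Int.leInduction with
  | base => rw [changeCount_of_le le_rfl, changeCount_of_le le_rfl]
  | succ x hax ih =>
    have hfx : f a ≤ f x := hf hax
    rw [changeCount_succ hax, ← ih, ← hc x, ← hc (x + 1)]
    rcases hstep x with h | ⟨h, hmid⟩
    · rw [h, changeCount_succ hfx]
    · rw [h, show f x + 2 = f x + 1 + 1 by ring, changeCount_succ (by omega),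
        changeCount_succ hfx, hmid, hc, if_pos rfl, add_zero]

end ChangeCount

lemma phiC_eq_changeCount : phiC S = changeCount (colS S) (xmin S) := rfl

lemma phiR_eq_changeCount : phiR S = changeCount (rowS S) (ymin S) := rfl

section Transpose

def transpose (S : Finset (ℤ × ℤ)) : Finset (ℤ × ℤ) := S.image Prod.swap

lemma mem_transpose {p : ℤ × ℤ} : p ∈ transpose S ↔ p.swap ∈ S := by
  rw [transpose, mem_image]; simp [Prod.swap_eq_iff_eq_swap]

@[simp] lemma transpose_transpose : transpose (transpose S) = S := by
  ext p; simp [mem_transpose]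

lemma image_fst_transpose : (transpose S).image Prod.fst = S.image Prod.snd := by
  simp [transpose, image_image]; rfl

lemma xmin_transpose : xmin (transpose S) = ymin S := by
  rw [xmin, image_fst_transpose, ymin]

lemma colS_transpose : colS (transpose S) = rowS S := by
  funext x; ext y; simp [mem_colS, mem_rowS, mem_transpose]

lemma phiC_transpose : phiC (transpose S) = phiR S := by
  rw [phiC_eq_changeCount, colS_transpose, xmin_transpose]; rfl

lemma phiR_transpose : phiR (transpose S) = phiC S := by
  simpa using (phiC_transpose (S := transpose S)).symm

lemma MC_transpose : MC (transpose S) = MR S := by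
  funext i; simp only [MC, MR, image_fst_transpose, phiC_transpose]

lemma MR_transpose : MR (transpose S) = MC S := by
  simpa using (MC_transpose (S := transpose S)).symm

lemma KC_transpose : KC (transpose S) = transpose (KR S) := by
  rw [KC, phiC_transpose, KR]; simp only [transpose, image_image]; rfl

lemma RCN_eq_transpose {D : Finset ℤ} : RCN S D = transpose (RCE (transpose S) D) := by
  simp only [RCN, RCE, transpose, image_union, image_image, filter_image]
  rfl

lemma eastAdmissible_transpose {D : Finset ℤ} :
    eastAdmissible (transpose S) D ↔ northAdmissible S D := by
  simp [eastAdmissible, northAdmissible, mem_transpose]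

lemma _root_.RCStep.transpose (h : RCStep S T) : RCStep (transpose S) (transpose T) := by
  obtain ⟨D, ⟨hD, rfl⟩ | ⟨hD, rfl⟩⟩ := h
  · refine ⟨D, Or.inr ⟨?_, ?_⟩⟩
    · rwa [← eastAdmissible_transpose, transpose_transpose]
    · rw [RCN_eq_transpose, transpose_transpose]
  · refine ⟨D, Or.inl ⟨eastAdmissible_transpose.2 hD, ?_⟩⟩
    rw [RCN_eq_transpose, transpose_transpose]

lemma reflTransGen_transpose (h : ReflTransGen RCStep S T) :
    ReflTransGen RCStep (transpose S) (transpose T) :=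
  h.lift transpose fun _ _ => RCStep.transpose

end Transpose

section Translate

variable {v : ℤ × ℤ}

lemma mem_translateSh {p : ℤ × ℤ} :
    p ∈ translateSh v S ↔ (p.1 - v.1, p.2 - v.2) ∈ S := by
  rw [translateSh, mem_image]
  constructor
  · rintro ⟨q, hq, rfl⟩; simpa using hq
  · exact fun h => ⟨_, h, by simp⟩

lemma image_translateSh {β : Type*} [DecidableEq β] (g : ℤ × ℤ → β) :
    (translateSh v S).image g = S.image fun p => g (p.1 + v.1, p.2 + v.2) :=
  image_image

lemma translateSh_translateSh {u : ℤ × ℤ} :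
    translateSh u (translateSh v S) = translateSh (u + v) S := by
  ext p; simp [mem_translateSh, sub_sub]

lemma eq_translateSh_neg (h : T = translateSh v S) : S = translateSh (-v) T := by
  ext p; simp [h, mem_translateSh]

lemma transpose_translateSh : transpose (translateSh v S) = translateSh v.swap (transpose S) := by
  ext p; simp [mem_transpose, mem_translateSh]

lemma image_fst_translateSh :
    (translateSh v S).image Prod.fst = (S.image Prod.fst).map (addRightEmbedding v.1) := by
  simp only [translateSh, map_eq_image, image_image]; rfl

lemma mem_image_fst_translateSh {x : ℤ} :
    x ∈ (translateSh v S).image Prod.fst ↔ x - v.1 ∈ S.image Prod.fst := by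
  rw [image_fst_translateSh, mem_map]
  exact ⟨by rintro ⟨y, hy, rfl⟩; simpa using hy, fun h => ⟨_, h, by simp⟩⟩

lemma xmin_translateSh (hS : S.Nonempty) : xmin (translateSh v S) = xmin S + v.1 := by
  apply le_antisymm
  · exact xmin_le (mem_image_fst_translateSh.2 (by simpa using xmin_mem_image_fst hS))
  · have hne : (translateSh v S).Nonempty := hS.image _
    have := xmin_le (mem_image_fst_translateSh.1 (xmin_mem_image_fst hne))
    omega

lemma colS_translateSh {x : ℤ} :
    colS (translateSh v S) (x + v.1) = (colS S x).image (· + v.2) := by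
  ext y; simp [mem_colS, mem_translateSh, sub_eq_add_neg]

lemma phiC_translateSh (hS : S.Nonempty) {x : ℤ} :
    phiC (translateSh v S) (x + v.1) = phiC S x := by
  rw [phiC_eq_changeCount, phiC_eq_changeCount, xmin_translateSh hS]
  exact changeCount_add _ fun x y => by
    rw [colS_translateSh, colS_translateSh, (image_injective (add_left_injective v.2)).eq_iff]

lemma phiR_translateSh (hS : S.Nonempty) {y : ℤ} :
    phiR (translateSh v S) (y + v.2) = phiR S y := by
  rw [← phiC_transpose, transpose_translateSh, ← phiC_transpose]
  exact phiC_translateSh (hS.image _)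

lemma MC_translateSh (hS : S.Nonempty) : MC (translateSh v S) = MC S := by
  funext i
  rw [MC, MC, image_fst_translateSh, filter_map, card_map]
  congr 1
  exact filter_congr fun x _ => by simp [phiC_translateSh hS]

lemma MR_translateSh (hS : S.Nonempty) : MR (translateSh v S) = MR S := by
  rw [← MC_transpose, transpose_translateSh, MC_translateSh (S := transpose S) (hS.image _),
    MC_transpose]

end Translate

section Connected

def AdjIn (S : Finset (ℤ × ℤ)) (a b : ℤ × ℤ) : Prop := a ∈ S ∧ b ∈ S ∧ Adj a b

lemma adj_comm {a b : ℤ × ℤ} : Adj a b ↔ Adj b a := by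
  unfold Adj; constructor <;> intro h <;> omega

lemma reflTransGen_adjIn_symm {a b : ℤ × ℤ} (h : ReflTransGen (AdjIn S) a b) :
    ReflTransGen (AdjIn S) b a :=
  reflTransGen_swap.1
    (ReflTransGen.mono (fun _ _ ⟨ha, hb, hab⟩ => ⟨hb, ha, adj_comm.1 hab⟩) _ _ h)

lemma _root_.ShapeConnected.of_map (hS : ShapeConnected S) (f : ℤ × ℤ → ℤ × ℤ)
    (hadj : ∀ p ∈ S, ∀ q ∈ S, Adj p q → ReflTransGen (AdjIn T) (f p) (f q))
    (hcover : ∀ t ∈ T, ∃ p ∈ S, ReflTransGen (AdjIn T) t (f p)) :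
    ShapeConnected T := by
  intro u hu w hw
  obtain ⟨p, hp, hup⟩ := hcover u hu
  obtain ⟨q, hq, hwq⟩ := hcover w hw
  have hpq : ReflTransGen (AdjIn T) (f p) (f q) :=
    ReflTransGen.lift' f (fun a b ⟨ha, hb, hab⟩ => hadj a ha b hb hab) _ _
      (hS p hp q hq)
  exact (hup.trans hpq).trans (reflTransGen_adjIn_symm hwq)

lemma _root_.ShapeConnected.transpose (h : ShapeConnected S) : ShapeConnected (transpose S) :=
  h.of_map Prod.swap
    (fun p hp q hq hpq => .single ⟨mem_transpose.2 (by simpa), mem_transpose.2 (by simpa),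
      by unfold Adj at *; simp only [Prod.fst_swap, Prod.snd_swap]; omega⟩)
    (fun t ht => ⟨t.swap, mem_transpose.1 ht, by rw [Prod.swap_swap]⟩)

lemma _root_.ShapeConnected.ordConnected_image_fst (h : ShapeConnected S) :
    (↑(S.image Prod.fst) : Set ℤ).OrdConnected := by
  refine ⟨?_⟩
  rintro _ hx _ hy z ⟨hxz, hzy⟩
  simp only [coe_image, Set.mem_image, mem_coe] at hx hy ⊢
  obtain ⟨p, hp, rfl⟩ := hx
  obtain ⟨q, hq, rfl⟩ := hy
  have key : ∀ q, ReflTransGen (AdjIn S) p q → ∀ z, p.1 ≤ z → z ≤ q.1 →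
      ∃ r ∈ S, r.1 = z := by
    intro q hpq
    induction hpq with
    | refl => exact fun z h1 h2 => ⟨p, hp, by omega⟩
    | @tail b c _ hbc ih =>
      intro z h1 h2
      by_cases hz : z ≤ b.1
      · exact ih z h1 hz
      · exact ⟨c, hbc.2.1, by have := hbc.2.2; unfold Adj at this; omega⟩
  exact key q (h p hp q hq) z hxz hzy

lemma _root_.ShapeConnected.ordConnected_image_snd (h : ShapeConnected S) :
    (↑(S.image Prod.snd) : Set ℤ).OrdConnected := by
  rw [← image_fst_transpose]
  exact h.transpose.ordConnected_image_fst

end Connected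

section Compression

lemma colS_eq_of_phiC_eq {x y : ℤ} (hx : x ∈ S.image Prod.fst) (hy : y ∈ S.image Prod.fst)
    (h : phiC S x = phiC S y) : colS S x = colS S y := by
  rcases le_total x y with hxy | hxy
  · exact eq_of_changeCount_eq (xmin_le hx) hxy h
  · exact (eq_of_changeCount_eq (xmin_le hy) hxy h.symm).symm

lemma colS_KC {x : ℤ} (hx : x ∈ S.image Prod.fst) : colS (KC S) (phiC S x) = colS S x := by
  ext y
  simp only [mem_colS, KC, mem_image, Prod.mk.injEq, Nat.cast_inj]
  constructor
  · rintro ⟨p, hp, hpx, rfl⟩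
    rw [← mem_colS, ← colS_eq_of_phiC_eq (mem_image_of_mem _ hp) hx hpx, mem_colS]
    exact hp
  · exact fun h => ⟨_, h, rfl, rfl⟩

lemma rowS_KC {y : ℤ} : rowS (KC S) y = (rowS S y).image fun x => (phiC S x : ℤ) := by
  ext a; simp [KC, rowS]

lemma rowS_subset_of_rowS_KC_subset {y y' : ℤ} (h : rowS (KC S) y ⊆ rowS (KC S) y') :
    rowS S y ⊆ rowS S y' := by
  intro x hx
  obtain ⟨x', hx', hphi⟩ := mem_image.1 (rowS_KC ▸ h (rowS_KC ▸ mem_image_of_mem _ hx))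
  have hcol := colS_eq_of_phiC_eq (mem_image_of_mem _ (mem_rowS.1 hx'))
    (mem_image_of_mem _ (mem_rowS.1 hx)) (by exact_mod_cast hphi)
  rw [mem_rowS, ← mem_colS, ← hcol, mem_colS]
  exact mem_rowS.1 hx'

lemma rowS_KC_eq_iff {y y' : ℤ} : rowS (KC S) y = rowS (KC S) y' ↔ rowS S y = rowS S y' :=
  ⟨fun h => (rowS_subset_of_rowS_KC_subset h.le).antisymm (rowS_subset_of_rowS_KC_subset h.ge),
    fun h => by rw [rowS_KC, rowS_KC, h]⟩

lemma image_snd_KC : (KC S).image Prod.snd = S.image Prod.snd := by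
  simp only [KC, image_image]; rfl

lemma phiR_KC : phiR (KC S) = phiR S := by
  rw [phiR_eq_changeCount, phiR_eq_changeCount, ymin, image_snd_KC, ← ymin]
  exact changeCount_congr fun _ _ => rowS_KC_eq_iff

lemma MR_KC : MR (KC S) = MR S := by
  funext i; simp only [MR, image_snd_KC, phiR_KC]

lemma Baseline_eq_image :
    Baseline S = S.image fun p => ((phiC S p.1 : ℤ), (phiR S p.2 : ℤ)) := by
  rw [Baseline, KR, phiR_KC, KC, image_image]; rfl

lemma Baseline_transpose : Baseline (transpose S) = transpose (Baseline S) := by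
  rw [Baseline_eq_image, Baseline_eq_image, phiC_transpose, phiR_transpose]
  simp only [transpose, image_image]; rfl

lemma mC_eq_sup_Baseline : mC S = (Baseline S).sup (fun p => p.1.toNat) + 1 := by
  simp only [mC, Baseline_eq_image, sup_image]; rfl

lemma mC_transpose : mC (transpose S) = mR S := by
  simp only [mC, mR, image_fst_transpose, phiC_transpose]

lemma mC_eq_of_Baseline_eq (h : Baseline S = Baseline T) : mC S = mC T := by
  rw [mC_eq_sup_Baseline, mC_eq_sup_Baseline, h]

lemma mR_eq_of_Baseline_eq (h : Baseline S = Baseline T) : mR S = mR T := by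
  rw [← mC_transpose, ← mC_transpose]
  exact mC_eq_of_Baseline_eq (by rw [Baseline_transpose, Baseline_transpose, h])

variable {v : ℤ × ℤ}

lemma Baseline_translateSh (hS : S.Nonempty) : Baseline (translateSh v S) = Baseline S := by
  rw [Baseline_eq_image, image_translateSh, Baseline_eq_image]
  simp only [phiC_translateSh hS, phiR_translateSh hS]

lemma KC_translateSh (hS : S.Nonempty) : KC (translateSh v S) = translateSh (0, v.2) (KC S) := by
  rw [KC, image_translateSh]
  simp only [phiC_translateSh hS]
  rw [KC, translateSh, image_image]
  simp only [add_zero]; rfl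

end Compression

section Multiplicities

lemma phiC_mono : Monotone (phiC S) := changeCount_mono

lemma phiC_lt_mC {x : ℤ} (hx : x ∈ S.image Prod.fst) : phiC S x < mC S :=
  Nat.lt_succ_of_le (le_sup hx)

lemma MC_eq_zero_of_mC_le {i : ℕ} (h : mC S ≤ i) : MC S i = 0 :=
  card_eq_zero.2 (filter_eq_empty_iff.2 fun _ hx => ((phiC_lt_mC hx).trans_le h).ne)

lemma MR_eq_zero_of_mR_le {i : ℕ} (h : mR S ≤ i) : MR S i = 0 := by
  rw [← MC_transpose]
  exact MC_eq_zero_of_mC_le (by rwa [mC_transpose])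

lemma card_filter_phiC_lt (i : ℕ) :
    #{x ∈ S.image Prod.fst | phiC S x < i} = ∑ j ∈ range i, MC S j := by
  rw [card_eq_sum_card_fiberwise (f := phiC S) (t := range i)
    fun x hx => mem_coe.2 (mem_range.2 (mem_filter.1 (mem_coe.1 hx)).2)]
  refine sum_congr rfl fun j hj => ?_
  rw [MC, filter_filter]
  congr 1
  exact filter_congr fun x _ => by rw [mem_range] at hj; omega

lemma card_image_fst_eq_sum_MC : #(S.image Prod.fst) = ∑ j ∈ range (mC S), MC S j := by
  rw [← card_filter_phiC_lt, filter_true_of_mem fun _ hx => phiC_lt_mC hx]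

lemma colS_eq_empty {x : ℤ} (hx : x ∉ S.image Prod.fst) : colS S x = ∅ :=
  eq_empty_of_forall_notMem fun _ hy => hx (mem_image_of_mem _ (mem_colS.1 hy))

variable (hS : S.Nonempty) (hSc : (↑(S.image Prod.fst) : Set ℤ).OrdConnected)
include hS hSc

lemma MC_pos {i : ℕ} (hi : i < mC S) : 0 < MC S i := by
  obtain ⟨x, hx, hsup⟩ := exists_mem_eq_sup _ (hS.image Prod.fst) (phiC S)
  obtain ⟨z, hz1, hz2, rfl⟩ :=
    exists_changeCount_eq (xmin_le hx) (show i ≤ phiC S x by rw [mC, hsup] at hi; omega)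
  have hz : z ∈ S.image Prod.fst := hSc.out (xmin_mem_image_fst hS) hx ⟨hz1, hz2⟩
  exact card_pos.2 ⟨z, mem_filter.2 ⟨hz, rfl⟩⟩

lemma lt_mC_iff_MC_ne_zero {i : ℕ} : i < mC S ↔ MC S i ≠ 0 :=
  ⟨fun h => (MC_pos hS hSc h).ne', fun h => by
    by_contra h'; exact h (MC_eq_zero_of_mC_le (not_lt.1 h'))⟩

lemma mem_image_fst_iff {x : ℤ} :
    x ∈ S.image Prod.fst ↔ xmin S ≤ x ∧ x < xmin S + #(S.image Prod.fst) := by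
  have hne : (S.image Prod.fst).Nonempty := hS.image _
  have hIcc : S.image Prod.fst = Icc (xmin S) ((S.image Prod.fst).max' hne) := by
    ext z
    rw [mem_Icc]
    exact ⟨fun hz => ⟨xmin_le hz, le_max' _ _ hz⟩,
      fun hz => hSc.out (xmin_mem_image_fst hS) (max'_mem _ _) hz⟩
  rw [hIcc, mem_Icc, Int.card_Icc]
  omega

lemma phiC_lt_iff {x : ℤ} (hx : x ∈ S.image Prod.fst) {i : ℕ} :
    phiC S x < i ↔ x - xmin S < ∑ j ∈ range i, MC S j := by
  -- `φ` is monotone, so `{z | φ z < i}` is an initial segment of the interval of columns.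
  rw [← card_filter_phiC_lt]
  constructor
  · intro h
    have hsub : Icc (xmin S) x ⊆ {z ∈ S.image Prod.fst | phiC S z < i} := fun z hz =>
      mem_filter.2 ⟨hSc.out (xmin_mem_image_fst hS) hx (mem_Icc.1 hz),
        (phiC_mono (mem_Icc.1 hz).2).trans_lt h⟩
    have := card_le_card hsub
    rw [Int.card_Icc] at this
    omega
  · intro h
    by_contra hle
    have hsub : {z ∈ S.image Prod.fst | phiC S z < i} ⊆ Ico (xmin S) x := fun z hz => by
      rw [mem_filter] at hz
      refine mem_Ico.2 ⟨xmin_le hz.1, lt_of_not_ge fun hxz => ?_⟩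
      have := phiC_mono (S := S) hxz
      omega
    have := card_le_card hsub
    rw [Int.card_Ico] at this
    have := xmin_le hx
    omega

lemma phiC_eq_of_MC_eq (hT : T.Nonempty)
    (hTc : (↑(T.image Prod.fst) : Set ℤ).OrdConnected) (h : MC S = MC T) {x y : ℤ}
    (hx : x ∈ S.image Prod.fst) (hy : y ∈ T.image Prod.fst) (hxy : x - xmin S = y - xmin T) :
    phiC S x = phiC T y :=
  eq_of_forall_gt_iff fun i => by rw [phiC_lt_iff hS hSc hx, phiC_lt_iff hT hTc hy, hxy, h]

end Multiplicities

section Uniqueness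

lemma eq_translateSh_of_KC_eq (hS : S.Nonempty)
    (hSc : (↑(S.image Prod.fst) : Set ℤ).OrdConnected)
    (hT : T.Nonempty) (hTc : (↑(T.image Prod.fst) : Set ℤ).OrdConnected)
    (hKC : KC S = KC T) (hMC : MC S = MC T) : T = translateSh (xmin T - xmin S, 0) S := by
  have hmC : mC S = mC T := eq_of_forall_lt_iff fun i => by
    rw [lt_mC_iff_MC_ne_zero hS hSc, lt_mC_iff_MC_ne_zero hT hTc, hMC]
  have hcard : #(S.image Prod.fst) = #(T.image Prod.fst) := by
    rw [card_image_fst_eq_sum_MC, card_image_fst_eq_sum_MC, hmC, hMC]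
  have hmem (x : ℤ) : x ∈ T.image Prod.fst ↔ x - (xmin T - xmin S) ∈ S.image Prod.fst := by
    rw [mem_image_fst_iff hS hSc, mem_image_fst_iff hT hTc, hcard]
    omega
  have hcol : ∀ x, colS T x = colS S (x - (xmin T - xmin S)) := by
    intro x
    by_cases hx : x ∈ T.image Prod.fst
    · have hx' := (hmem x).1 hx
      rw [← colS_KC hx, ← colS_KC hx', hKC,
        phiC_eq_of_MC_eq hS hSc hT hTc hMC hx' hx (by omega)]
    · rw [colS_eq_empty hx, colS_eq_empty (mt (hmem x).2 hx)]
  ext ⟨x, y⟩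
  rw [mem_translateSh, ← mem_colS, hcol, mem_colS, sub_zero]

lemma eq_translateSh_of_KR_eq (hS : S.Nonempty)
    (hSr : (↑(S.image Prod.snd) : Set ℤ).OrdConnected)
    (hT : T.Nonempty) (hTr : (↑(T.image Prod.snd) : Set ℤ).OrdConnected)
    (hKR : KR S = KR T) (hMR : MR S = MR T) : T = translateSh (0, ymin T - ymin S) S := by
  have h := eq_translateSh_of_KC_eq (S := transpose S) (T := transpose T) (hS.image _)
    (by rwa [image_fst_transpose]) (hT.image _) (by rwa [image_fst_transpose])
    (by rw [KC_transpose, KC_transpose, hKR]) (by rw [MC_transpose, MC_transpose, hMR])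
  simpa [transpose_translateSh, xmin_transpose] using congrArg transpose h

lemma exists_eq_translateSh_of_Baseline_eq (hS : S.Nonempty)
    (hSc : (↑(S.image Prod.fst) : Set ℤ).OrdConnected)
    (hSr : (↑(S.image Prod.snd) : Set ℤ).OrdConnected) (hT : T.Nonempty)
    (hTc : (↑(T.image Prod.fst) : Set ℤ).OrdConnected)
    (hTr : (↑(T.image Prod.snd) : Set ℤ).OrdConnected)
    (hB : Baseline S = Baseline T) (hMC : MC S = MC T) (hMR : MR S = MR T) :
    ∃ v, T = translateSh v S := by
  have hKC := eq_translateSh_of_KR_eq (S := KC S) (T := KC T) (hS.image _)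
    (by rwa [image_snd_KC]) (hT.image _) (by rwa [image_snd_KC]) hB (by rw [MR_KC, MR_KC, hMR])
  set S' := translateSh (0, ymin (KC T) - ymin (KC S)) S
  have hS'c : (↑(S'.image Prod.fst) : Set ℤ).OrdConnected := by
    simpa [S', image_translateSh] using hSc
  have h := eq_translateSh_of_KC_eq (S := S') (hS.image _) hS'c hT hTc
    (by rw [KC_translateSh hS]; exact hKC.symm) (by rw [MC_translateSh hS, hMC])
  exact ⟨_, h.trans translateSh_translateSh⟩

end Uniqueness

section EastDoubling

variable {D : Finset ℤ}

def eastShift (D : Finset ℤ) (x : ℤ) : ℤ := x + wD D x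

lemma wD_mono : Monotone (wD D) := fun _ _ h =>
  card_le_card fun z hz => by
    simp only [mem_filter] at hz ⊢
    exact ⟨hz.1, hz.2.trans_le h⟩

lemma wD_succ (x : ℤ) : wD D (x + 1) = wD D x + if x ∈ D then 1 else 0 := by
  have hsplit : D.filter (· < x + 1) = D.filter (· < x) ∪ D.filter (· = x) := by
    rw [← filter_or]; exact filter_congr fun z _ => by omega
  rw [wD, wD, hsplit, card_union_of_disjoint (disjoint_filter.2 fun z _ h1 h2 => by omega),
    filter_eq']
  split_ifs <;> simp

lemma eastShift_succ (x : ℤ) :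
    eastShift D (x + 1) = eastShift D x + 1 + if x ∈ D then 1 else 0 := by
  rw [eastShift, eastShift, wD_succ]; split_ifs <;> push_cast <;> ring

lemma eastShift_strictMono : StrictMono (eastShift D) := fun x y h => by
  have := wD_mono (D := D) h.le
  unfold eastShift; omega

lemma le_eastShift (x : ℤ) : x ≤ eastShift D x := by
  unfold eastShift; omega

lemma eastShift_ne_add_one {d : ℤ} (hd : d ∈ D) (x : ℤ) :
    eastShift D x ≠ eastShift D d + 1 := by
  intro h
  have hsucc := eastShift_succ (D := D) d
  rw [if_pos hd] at hsucc
  have h1 := eastShift_strictMono.lt_iff_lt.1 (show eastShift D d < eastShift D x by omega)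
  have h2 := eastShift_strictMono.lt_iff_lt.1 (show eastShift D x < eastShift D (d + 1) by omega)
  omega

lemma RCE_def : RCE S D = S.image (fun p => (eastShift D p.1, p.2)) ∪
    (S.filter fun p => p.1 ∈ D).image fun p => (eastShift D p.1 + 1, p.2) := rfl

lemma mem_RCE {z y : ℤ} :
    (z, y) ∈ RCE S D ↔
      ∃ x, (x, y) ∈ S ∧ (eastShift D x = z ∨ x ∈ D ∧ eastShift D x + 1 = z) := by
  simp only [RCE_def, mem_union, mem_image, mem_filter, Prod.exists, Prod.mk.injEq]
  constructor
  · rintro (⟨x, y, h, rfl, rfl⟩ | ⟨x, y, ⟨h, hx⟩, rfl, rfl⟩)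
    · exact ⟨x, h, Or.inl rfl⟩
    · exact ⟨x, h, Or.inr ⟨hx, rfl⟩⟩
  · rintro ⟨x, h, rfl | ⟨hx, rfl⟩⟩
    · exact Or.inl ⟨x, y, h, rfl, rfl⟩
    · exact Or.inr ⟨x, y, ⟨h, hx⟩, rfl, rfl⟩

lemma mem_RCE_eastShift {x y : ℤ} : (eastShift D x, y) ∈ RCE S D ↔ (x, y) ∈ S := by
  rw [mem_RCE]
  constructor
  · rintro ⟨x', h, hx' | ⟨hd, hx'⟩⟩
    · rwa [← eastShift_strictMono.injective hx']
    · exact absurd hx'.symm (eastShift_ne_add_one hd x)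
  · exact fun h => ⟨x, h, Or.inl rfl⟩

lemma mem_RCE_eastShift_add_one {d y : ℤ} (hd : d ∈ D) :
    (eastShift D d + 1, y) ∈ RCE S D ↔ (d, y) ∈ S := by
  rw [mem_RCE]
  constructor
  · rintro ⟨x', h, hx' | ⟨-, hx'⟩⟩
    · exact absurd hx' (eastShift_ne_add_one hd x')
    · rwa [← eastShift_strictMono.injective (add_right_cancel hx')]
  · exact fun h => ⟨d, h, Or.inr ⟨hd, rfl⟩⟩

lemma colS_RCE_eastShift {x : ℤ} : colS (RCE S D) (eastShift D x) = colS S x := by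
  ext; rw [mem_colS, mem_colS, mem_RCE_eastShift]

lemma colS_RCE_eastShift_add_one {d : ℤ} (hd : d ∈ D) :
    colS (RCE S D) (eastShift D d + 1) = colS S d := by
  ext; rw [mem_colS, mem_colS, mem_RCE_eastShift_add_one hd]

lemma image_fst_RCE (hD : D ⊆ S.image Prod.fst) :
    (RCE S D).image Prod.fst = (S.image Prod.fst).image (eastShift D) ∪
      D.image (eastShift D · + 1) := by
  have hfilter : (S.filter fun p => p.1 ∈ D).image Prod.fst = D := by
    ext x
    constructor
    · intro hx
      obtain ⟨p, hp, rfl⟩ := mem_image.1 hx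
      exact (mem_filter.1 hp).2
    · intro hx
      obtain ⟨p, hp, rfl⟩ := mem_image.1 (hD hx)
      exact mem_image_of_mem _ (mem_filter.2 ⟨hp, hx⟩)
  calc (RCE S D).image Prod.fst = (S.image Prod.fst).image (eastShift D) ∪
        ((S.filter fun p => p.1 ∈ D).image Prod.fst).image (eastShift D · + 1) := by
          rw [RCE_def, image_union]; simp only [image_image]; rfl
    _ = _ := by rw [hfilter]

lemma eastShift_xmin (hD : D ⊆ S.image Prod.fst) : eastShift D (xmin S) = xmin S := by
  have : wD D (xmin S) = 0 :=
    card_eq_zero.2 (filter_eq_empty_iff.2 fun d hd => not_lt.2 (xmin_le (hD hd)))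
  rw [eastShift, this]; simp

lemma RCE_nonempty (hS : S.Nonempty) : (RCE S D).Nonempty :=
  (hS.image _).mono subset_union_left

lemma image_snd_RCE : (RCE S D).image Prod.snd = S.image Prod.snd := by
  rw [RCE_def, image_union, image_image, image_image]
  exact union_eq_left.2 (image_subset_image (filter_subset _ _))

lemma eastShift_mem_rowS_RCE {x y : ℤ} :
    eastShift D x ∈ rowS (RCE S D) y ↔ x ∈ rowS S y := by
  rw [mem_rowS, mem_rowS, mem_RCE_eastShift]

lemma rowS_RCE_eq_iff {y y' : ℤ} :
    rowS (RCE S D) y = rowS (RCE S D) y' ↔ rowS S y = rowS S y' := by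
  constructor
  · intro h
    ext x
    rw [← eastShift_mem_rowS_RCE (D := D), h, eastShift_mem_rowS_RCE]
  · intro h
    ext z
    rw [mem_rowS, mem_rowS, mem_RCE, mem_RCE]
    simp only [← mem_rowS (S := S), h]

lemma phiR_RCE : phiR (RCE S D) = phiR S := by
  rw [phiR_eq_changeCount, phiR_eq_changeCount, ymin, image_snd_RCE, ← ymin]
  exact changeCount_congr fun _ _ => rowS_RCE_eq_iff

lemma MR_RCE : MR (RCE S D) = MR S := by
  funext i; simp only [MR, image_snd_RCE, phiR_RCE]

lemma reflTransGen_RCE_eastShift_succ {x y : ℤ} (hp : (x, y) ∈ S) (hq : (x + 1, y) ∈ S) :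
    ReflTransGen (AdjIn (RCE S D)) (eastShift D x, y) (eastShift D (x + 1), y) := by
  have hp' := mem_RCE_eastShift (D := D).2 hp
  have hq' := mem_RCE_eastShift (D := D).2 hq
  have hsucc := eastShift_succ (D := D) x
  by_cases hx : x ∈ D
  · rw [if_pos hx] at hsucc
    have hmid := (mem_RCE_eastShift_add_one hx).2 hp
    exact .head ⟨hp', hmid, by unfold Adj; dsimp only; omega⟩
      (.single ⟨hmid, hq', by unfold Adj; dsimp only; omega⟩)
  · rw [if_neg hx] at hsucc
    exact .single ⟨hp', hq', by unfold Adj; dsimp only; omega⟩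

lemma _root_.ShapeConnected.RCE (h : ShapeConnected S) : ShapeConnected (RCE S D) :=
  h.of_map (fun p => (eastShift D p.1, p.2))
    (fun ⟨x, y⟩ hp ⟨x', y'⟩ hq hpq => by
      unfold Adj at hpq
      dsimp only at hpq ⊢
      by_cases hx : x = x'
      · subst hx
        exact .single ⟨mem_RCE_eastShift.2 hp, mem_RCE_eastShift.2 hq,
          by unfold Adj; dsimp only; omega⟩
      · obtain rfl : y = y' := by omega
        rcases (show x' = x + 1 ∨ x = x' + 1 by omega) with rfl | rfl
        · exact reflTransGen_RCE_eastShift_succ hp hq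
        · exact reflTransGen_adjIn_symm (reflTransGen_RCE_eastShift_succ hq hp))
    (fun ⟨z, y⟩ ht => by
      obtain ⟨x, hx, rfl | ⟨-, rfl⟩⟩ := mem_RCE.1 ht
      · exact ⟨(x, y), hx, .refl⟩
      · refine ⟨(x, y), hx, .single ⟨ht, mem_RCE_eastShift.2 hx, ?_⟩⟩
        unfold Adj; dsimp only; omega)

variable (hS : S.Nonempty) (hD : D ⊆ S.image Prod.fst)
include hS hD

lemma xmin_RCE : xmin (RCE S D) = xmin S := by
  have hmem := xmin_mem_image_fst (RCE_nonempty (D := D) hS)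
  rw [image_fst_RCE hD] at hmem
  apply le_antisymm
  · have h := mem_union_left (D.image (eastShift D · + 1))
      (mem_image_of_mem (eastShift D) (xmin_mem_image_fst hS))
    rw [← image_fst_RCE hD, eastShift_xmin hD] at h
    exact xmin_le h
  · rcases mem_union.1 hmem with h | h
    · obtain ⟨x, hx, hx'⟩ := mem_image.1 h
      rw [← hx']
      exact (xmin_le hx).trans (le_eastShift x)
    · obtain ⟨d, hd, hd'⟩ := mem_image.1 h
      have := le_eastShift (D := D) d
      have := xmin_le (hD hd)
      omega

lemma phiC_RCE_eastShift {x : ℤ} (hx : xmin S ≤ x) :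
    phiC (RCE S D) (eastShift D x) = phiC S x := by
  have hstep : ∀ x, eastShift D (x + 1) = eastShift D x + 1 ∨
      (eastShift D (x + 1) = eastShift D x + 2 ∧
        colS (RCE S D) (eastShift D x + 1) = colS (RCE S D) (eastShift D x)) := fun x => by
    by_cases hxD : x ∈ D
    · refine Or.inr ⟨by rw [eastShift_succ, if_pos hxD]; ring, ?_⟩
      rw [colS_RCE_eastShift_add_one hxD, colS_RCE_eastShift]
    · exact Or.inl (by rw [eastShift_succ, if_neg hxD]; ring)
  have h := changeCount_stretch eastShift_strictMono.monotone (fun _ => colS_RCE_eastShift) hstep hx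
  rw [eastShift_xmin hD] at h
  rwa [phiC_eq_changeCount, phiC_eq_changeCount, xmin_RCE hS hD]

lemma phiC_RCE_eastShift_add_one {d : ℤ} (hd : d ∈ D) :
    phiC (RCE S D) (eastShift D d + 1) = phiC S d := by
  have hle : xmin (RCE S D) ≤ eastShift D d := by
    rw [xmin_RCE hS hD]; exact (xmin_le (hD hd)).trans (le_eastShift d)
  rw [phiC_eq_changeCount (S := RCE S D), changeCount_succ hle, colS_RCE_eastShift_add_one hd,
    colS_RCE_eastShift, if_pos rfl, add_zero]
  exact phiC_RCE_eastShift hS hD (xmin_le (hD hd))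

lemma KC_RCE : KC (RCE S D) = KC S := by
  rw [KC, RCE_def, image_union, image_image, image_image]
  have h1 : S.image (fun p => ((phiC (RCE S D) (eastShift D p.1) : ℤ), p.2)) = KC S :=
    image_congr fun p hp => by
      simp [phiC_RCE_eastShift hS hD (xmin_le (mem_image_of_mem _ (mem_coe.1 hp)))]
  have h2 : (S.filter fun p => p.1 ∈ D).image
      (fun p => ((phiC (RCE S D) (eastShift D p.1 + 1) : ℤ), p.2)) ⊆ KC S := fun q hq => by
    obtain ⟨p, hp, rfl⟩ := mem_image.1 hq
    rw [mem_filter] at hp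
    exact mem_image.2 ⟨p, hp.1, by simp [phiC_RCE_eastShift_add_one hS hD hp.2]⟩
  exact (congrArg₂ (· ∪ ·) h1 rfl).trans (union_eq_left.2 h2)

lemma Baseline_RCE : Baseline (RCE S D) = Baseline S := by
  rw [Baseline, KC_RCE hS hD, Baseline]

lemma MC_RCE (i : ℕ) : MC (RCE S D) i = MC S i + #{d ∈ D | phiC S d = i} := by
  have hdisj : Disjoint ((S.image Prod.fst).image (eastShift D)) (D.image (eastShift D · + 1)) :=
    disjoint_left.2 fun z hz hz' => by
      obtain ⟨x, -, rfl⟩ := mem_image.1 hz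
      obtain ⟨d, hd, h⟩ := mem_image.1 hz'
      exact eastShift_ne_add_one hd x h.symm
  rw [MC, image_fst_RCE hD, filter_union,
    card_union_of_disjoint (hdisj.mono (filter_subset _ _) (filter_subset _ _)),
    filter_image (s := S.image Prod.fst), filter_image (s := D),
    card_image_of_injective _ eastShift_strictMono.injective,
    card_image_of_injective _ fun a b h => eastShift_strictMono.injective (add_right_cancel h)]
  congr 1
  · exact congrArg card (filter_congr fun x hx => by rw [phiC_RCE_eastShift hS hD (xmin_le hx)])
  · exact congrArg card (filter_congr fun d hd => by rw [phiC_RCE_eastShift_add_one hS hD hd])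

end EastDoubling

section Reachability

structure Dominates (S T : Finset (ℤ × ℤ)) : Prop where
  baseline_eq : Baseline S = Baseline T
  MC_le : ∀ i, MC S i ≤ MC T i
  MR_le : ∀ i, MR S i ≤ MR T i

lemma Dominates.refl (S : Finset (ℤ × ℤ)) : Dominates S S :=
  ⟨rfl, fun _ => le_rfl, fun _ => le_rfl⟩

lemma Dominates.trans {U : Finset (ℤ × ℤ)} (h₁ : Dominates S T) (h₂ : Dominates T U) :
    Dominates S U :=
  ⟨h₁.baseline_eq.trans h₂.baseline_eq, fun i => (h₁.MC_le i).trans (h₂.MC_le i),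
    fun i => (h₁.MR_le i).trans (h₂.MR_le i)⟩

lemma Dominates.transpose (h : Dominates S T) : Dominates (transpose S) (transpose T) :=
  ⟨by rw [Baseline_transpose, Baseline_transpose, h.baseline_eq],
    by rw [MC_transpose, MC_transpose]; exact h.MR_le,
    by rw [MR_transpose, MR_transpose]; exact h.MC_le⟩

lemma Dominates.of_translateSh {v : ℤ × ℤ} (hT : T.Nonempty)
    (h : Dominates S (translateSh v T)) : Dominates S T :=
  ⟨by rw [← Baseline_translateSh (v := v) hT]; exact h.baseline_eq,
    by rw [← MC_translateSh (v := v) hT]; exact h.MC_le,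
    by rw [← MR_translateSh (v := v) hT]; exact h.MR_le⟩

lemma dominates_of_forall_lt (hB : Baseline S = Baseline T) (hMC : ∀ i < mC S, MC S i ≤ MC T i)
    (hMR : ∀ i < mR S, MR S i ≤ MR T i) : Dominates S T := by
  refine ⟨hB, fun i => ?_, fun i => ?_⟩
  · rcases lt_or_ge i (mC S) with hi | hi
    · exact hMC i hi
    · simp [MC_eq_zero_of_mC_le hi]
  · rcases lt_or_ge i (mR S) with hi | hi
    · exact hMR i hi
    · simp [MR_eq_zero_of_mR_le hi]

lemma Dominates.MC_eq_zero (h : Dominates S T) (hS : S.Nonempty)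
    (hSc : (↑(S.image Prod.fst) : Set ℤ).OrdConnected) {i : ℕ} (hi : MC S i = 0) :
    MC T i = 0 :=
  MC_eq_zero_of_mC_le (by
    rw [← mC_eq_of_Baseline_eq h.baseline_eq]
    exact not_lt.1 fun hlt => (lt_mC_iff_MC_ne_zero hS hSc).1 hlt hi)

lemma Dominates.MR_eq_zero (h : Dominates S T) (hS : S.Nonempty)
    (hSr : (↑(S.image Prod.snd) : Set ℤ).OrdConnected) {i : ℕ} (hi : MR S i = 0) :
    MR T i = 0 := by
  rw [← MC_transpose] at hi ⊢
  exact h.transpose.MC_eq_zero (hS.image _) (by rwa [image_fst_transpose]) hi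

lemma subset_image_fst_of_eastAdmissible {D : Finset ℤ} (h : eastAdmissible S D) :
    D ⊆ S.image Prod.fst := fun d hd => by
  obtain ⟨y, hy⟩ := h.2 d hd
  exact mem_image_of_mem Prod.fst hy

lemma _root_.RCStep.elim_transpose {P : Finset (ℤ × ℤ) → Finset (ℤ × ℤ) → Prop}
    (heast : ∀ S D, eastAdmissible S D → P S (RCE S D))
    (htranspose : ∀ S T, P S T → P (transpose S) (transpose T)) (h : RCStep S T) : P S T := by
  obtain ⟨D, ⟨hD, rfl⟩ | ⟨hD, rfl⟩⟩ := h
  · exact heast S D hD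
  · simpa [RCN_eq_transpose] using
      htranspose _ _ (heast (transpose S) D (eastAdmissible_transpose.2 hD))

lemma _root_.RCStep.nonempty (h : RCStep S T) (hS : S.Nonempty) : T.Nonempty :=
  h.elim_transpose (P := fun S T => S.Nonempty → T.Nonempty)
    (fun _ _ _ hS => RCE_nonempty hS) (fun _ _ hST hS => (hST (image_nonempty.1 hS)).image _) hS

lemma _root_.RCStep.dominates (h : RCStep S T) (hS : S.Nonempty) : Dominates S T :=
  h.elim_transpose (P := fun S T => S.Nonempty → Dominates S T)
    (fun _ _ hD hS => ⟨(Baseline_RCE hS (subset_image_fst_of_eastAdmissible hD)).symm,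
      fun i => by rw [MC_RCE hS (subset_image_fst_of_eastAdmissible hD)]; omega,
      fun i => by rw [MR_RCE]⟩)
    (fun _ _ hST hS => (hST (image_nonempty.1 hS)).transpose) hS

lemma _root_.RCStep.shapeConnected (h : RCStep S T) (hS : ShapeConnected S) : ShapeConnected T :=
  h.elim_transpose (P := fun S T => ShapeConnected S → ShapeConnected T)
    (fun _ _ _ hS => hS.RCE)
    (fun _ _ hST hS => (hST (by simpa using hS.transpose)).transpose) hS

lemma nonempty_of_reflTransGen (hS : S.Nonempty) (h : ReflTransGen RCStep S T) :
    T.Nonempty := by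
  induction h with
  | refl => exact hS
  | tail _ hstep ih => exact hstep.nonempty ih

lemma dominates_of_reflTransGen (hS : S.Nonempty) (h : ReflTransGen RCStep S T) :
    Dominates S T := by
  induction h with
  | refl => exact .refl S
  | tail hpath hstep ih => exact ih.trans (hstep.dominates (nonempty_of_reflTransGen hS hpath))

lemma shapeConnected_of_reflTransGen (hS : ShapeConnected S)
    (h : ReflTransGen RCStep S T) : ShapeConnected T := by
  induction h with
  | refl => exact hS
  | tail _ hstep ih => exact hstep.shapeConnected ih

lemma RCStep_RCE_singleton {x : ℤ} (hx : x ∈ S.image Prod.fst) : RCStep S (RCE S {x}) := by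
  obtain ⟨p, hp, rfl⟩ := mem_image.1 hx
  refine ⟨{p.1}, Or.inl ⟨⟨singleton_nonempty _, fun d hd => ⟨p.2, ?_⟩⟩, rfl⟩⟩
  rwa [mem_singleton.1 hd]

lemma MC_RCE_singleton (hS : S.Nonempty) {x : ℤ} (hx : x ∈ S.image Prod.fst) (i : ℕ) :
    MC (RCE S {x}) i = MC S i + if phiC S x = i then 1 else 0 := by
  rw [MC_RCE hS (singleton_subset_iff.2 hx), filter_singleton]
  split_ifs <;> rfl

lemma exists_reflTransGen_MC_eq {F : Finset (ℤ × ℤ)} (hS : S.Nonempty)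
    (hle : ∀ i, MC S i ≤ MC F i) (hpos : ∀ i, MC S i = 0 → MC F i = 0) :
    ∃ T, ReflTransGen RCStep S T ∧ MC T = MC F ∧ MR T = MR S := by
  obtain ⟨n, hn⟩ : ∃ n, ∑ i ∈ range (mC F), (MC F i - MC S i) = n := ⟨_, rfl⟩
  induction n using Nat.strong_induction_on generalizing S with
  | _ n ih =>
  by_cases hex : ∃ i, MC S i < MC F i
  · obtain ⟨i, hi⟩ := hex
    obtain ⟨x, hx⟩ := card_pos.1 (Nat.pos_of_ne_zero fun h0 => by have := hpos i h0; omega)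
    obtain ⟨hx, hxi⟩ := mem_filter.1 hx
    have hMC := MC_RCE_singleton hS hx
    have hiF : i < mC F := not_le.1 fun h => by have := MC_eq_zero_of_mC_le h; omega
    have hlt : ∑ j ∈ range (mC F), (MC F j - MC (RCE S {x}) j) < n := by
      rw [← hn]
      refine sum_lt_sum (fun j _ => by rw [hMC]; omega) ⟨i, mem_range.2 hiF, ?_⟩
      rw [hMC, if_pos hxi]
      omega
    obtain ⟨T, hT, hTC, hTR⟩ := ih _ hlt (RCE_nonempty hS)
      (fun j => by
        rw [hMC]
        split_ifs with h
        · rw [← h, hxi]; omega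
        · simpa using hle j)
      (fun j hj => hpos j (by rw [hMC] at hj; omega)) rfl
    exact ⟨T, .head (RCStep_RCE_singleton hx) hT, hTC, hTR.trans MR_RCE⟩
  · simp only [not_exists, not_lt] at hex
    exact ⟨S, .refl, funext fun i => le_antisymm (hle i) (hex i), rfl⟩

lemma exists_reflTransGen_MR_eq {F : Finset (ℤ × ℤ)} (hS : S.Nonempty)
    (hle : ∀ i, MR S i ≤ MR F i) (hpos : ∀ i, MR S i = 0 → MR F i = 0) :
    ∃ T, ReflTransGen RCStep S T ∧ MR T = MR F ∧ MC T = MC S := by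
  obtain ⟨T, hT, hTC, hTR⟩ := exists_reflTransGen_MC_eq (S := transpose S) (F := transpose F)
    (hS.image _) (by simpa [MC_transpose] using hle) (by simpa [MC_transpose] using hpos)
  refine ⟨transpose T, by simpa using reflTransGen_transpose hT, ?_, ?_⟩
  · rw [MR_transpose, hTC, MC_transpose]
  · rw [MC_transpose, hTR, MR_transpose]

lemma exists_reflTransGen_translateSh_of_dominates {F : Finset (ℤ × ℤ)} (hS : S.Nonempty)
    (hcS : ShapeConnected S) (hF : F.Nonempty) (hcF : ShapeConnected F) (h : Dominates S F) :
    ∃ v, ReflTransGen RCStep S (translateSh v F) := by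
  obtain ⟨S₁, h₁, hC₁, hR₁⟩ :=
    exists_reflTransGen_MC_eq hS h.MC_le fun _ => h.MC_eq_zero hS hcS.ordConnected_image_fst
  obtain ⟨S₂, h₂, hR₂, hC₂⟩ := exists_reflTransGen_MR_eq
    (nonempty_of_reflTransGen hS h₁) (hR₁ ▸ h.MR_le) fun _ hi => h.MR_eq_zero hS hcS.ordConnected_image_snd (hR₁ ▸ hi)
  have h₁₂ := h₁.trans h₂
  have hc₂ := shapeConnected_of_reflTransGen hcS h₁₂
  obtain ⟨v, hv⟩ := exists_eq_translateSh_of_Baseline_eq (nonempty_of_reflTransGen hS h₁₂)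
    hc₂.ordConnected_image_fst hc₂.ordConnected_image_snd hF hcF.ordConnected_image_fst
    hcF.ordConnected_image_snd ((dominates_of_reflTransGen hS h₁₂).baseline_eq.symm.trans
      h.baseline_eq) (hC₂.trans hC₁) hR₂
  exact ⟨-v, eq_translateSh_neg hv ▸ h₁₂⟩

end Reachability

end RCShape

/-- characterization of reachability under RC doubling via baselines and
column/row multiplicities. -/
theorem RC_reachability_characterization (S_I S_F : Finset (ℤ × ℤ))
    (hI : S_I.Nonempty) (hF : S_F.Nonempty)
    (hcI : ShapeConnected S_I) (hcF : ShapeConnected S_F) :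
    (∃ v : ℤ × ℤ, Relation.ReflTransGen RCStep S_I (translateSh v S_F)) ↔
      (Baseline S_I = Baseline S_F ∧
        mC S_I = mC S_F ∧ mR S_I = mR S_F ∧
        (∀ i < mC S_I, MC S_I i ≤ MC S_F i) ∧
        (∀ i < mR S_I, MR S_I i ≤ MR S_F i)) := by
  constructor
  · rintro ⟨v, h⟩
    have hd := (RCShape.dominates_of_reflTransGen hI h).of_translateSh hF
    exact ⟨hd.baseline_eq, RCShape.mC_eq_of_Baseline_eq hd.baseline_eq,
      RCShape.mR_eq_of_Baseline_eq hd.baseline_eq, fun i _ => hd.MC_le i, fun i _ => hd.MR_le i⟩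
  · rintro ⟨hB, -, -, hMC, hMR⟩
    exact RCShape.exists_reflTransGen_translateSh_of_dominates hI hcI hF hcF
      (RCShape.dominates_of_forall_lt hB hMC hMR)
end

section
/- (Uniqueness of the baseline shape) For every connected shape S, compressing columns first and then rows yields the same shape as compressing rows first and then columns: K_R(K_C(S)) = K_C(K_R(S)). In particular, the baseline B(S) does not depend on the order in which consecutive duplicate columns and rows are removed. -/
/-!
Columns of `S` only change at the positions counted by `φ_S`, so `φ_S(x) = φ_S(x')` forces
`col_S(x) = col_S(x')`. Hence column compression only merges equal columns, and two rows of
`K_C(S)` coincide exactly when the corresponding rows of `S` do: row compression of `K_C(S)`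
uses the same counting function as that of `S`. By the row/column symmetry the same holds
the other way round, and both composites send `(x, y) ∈ S` to `(φ_C(x), φ_R(y))`.
-/

open Finset

@[simp]
lemma mem_colS {S : Finset (ℤ × ℤ)} {x y : ℤ} : y ∈ colS S x ↔ (x, y) ∈ S := by
  simp [colS]

@[simp]
lemma mem_rowS {S : Finset (ℤ × ℤ)} {x y : ℤ} : x ∈ rowS S y ↔ (x, y) ∈ S := by
  simp [rowS]

def transposeSh (S : Finset (ℤ × ℤ)) : Finset (ℤ × ℤ) := S.image Prod.swap

section Transpose

variable (S : Finset (ℤ × ℤ))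

lemma transposeSh_transposeSh : transposeSh (transposeSh S) = S := by
  simp [transposeSh, image_image]

lemma rowS_transposeSh : rowS (transposeSh S) = colS S := by
  ext x y
  simp [transposeSh]

lemma ymin_transposeSh : ymin (transposeSh S) = xmin S := by
  simp only [ymin, xmin, transposeSh, image_image]
  rfl

lemma phiR_transposeSh : phiR (transposeSh S) = phiC S := by
  ext x
  simp only [phiR, phiC, ymin_transposeSh, rowS_transposeSh]

lemma phiC_transposeSh : phiC (transposeSh S) = phiR S := by
  simpa only [transposeSh_transposeSh] using (phiR_transposeSh (transposeSh S)).symm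

lemma transposeSh_KC : transposeSh (KC S) = KR (transposeSh S) := by
  rw [KR, phiR_transposeSh]
  simp only [transposeSh, KC, image_image]
  rfl

lemma KR_eq_transposeSh_KC : KR S = transposeSh (KC (transposeSh S)) := by
  rw [transposeSh_KC, transposeSh_transposeSh]

end Transpose

lemma xmin_le_of_mem {S : Finset (ℤ × ℤ)} {x y : ℤ} (h : (x, y) ∈ S) : xmin S ≤ x := by
  have hx : x ∈ S.image Prod.fst := mem_image_of_mem _ h
  obtain ⟨m, hm⟩ := min_of_mem hx
  have hle := min_le hx
  rw [hm] at hle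
  rw [xmin, hm]
  exact_mod_cast hle

lemma colS_eq_of_phiC_eq {S : Finset (ℤ × ℤ)} {x x' : ℤ} (hx : xmin S ≤ x) (hx' : xmin S ≤ x')
    (h : phiC S x = phiC S x') : colS S x = colS S x' := by
  wlog hle : x ≤ x' generalizing x x'
  · exact (this hx' hx h.symm (le_of_not_ge hle)).symm
  have hchanges : ((Icc (xmin S + 1) x).filter fun z => colS S z ≠ colS S (z - 1)) =
      (Icc (xmin S + 1) x').filter fun z => colS S z ≠ colS S (z - 1) :=
    eq_of_subset_of_card_le (filter_subset_filter _ (Icc_subset_Icc_right hle)) h.symm.le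
  have hstep : ∀ z, x < z → z ≤ x' → colS S z = colS S (z - 1) := by
    intro z hxz hzx'
    by_contra hne
    have hz : z ∈ (Icc (xmin S + 1) x').filter fun z => colS S z ≠ colS S (z - 1) :=
      mem_filter.2 ⟨mem_Icc.2 ⟨by omega, hzx'⟩, hne⟩
    rw [← hchanges, mem_filter, mem_Icc] at hz
    omega
  suffices ∀ z, x ≤ z → z ≤ x' → colS S z = colS S x from (this x' hle le_rfl).symm
  intro z hxz
  induction z, hxz using Int.leInduction with
  | base => intro _; rfl
  | succ z hxz ih =>
    intro hzx'
    rw [hstep (z + 1) (by omega) hzx', add_sub_cancel_right]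
    exact ih (by omega)

lemma rowS_KC (S : Finset (ℤ × ℤ)) (y : ℤ) :
    rowS (KC S) y = (rowS S y).image fun x => (phiC S x : ℤ) := by
  ext a
  simp only [rowS, KC, mem_image, mem_filter]
  constructor
  · rintro ⟨_, ⟨⟨q, hq, rfl⟩, rfl⟩, rfl⟩
    exact ⟨q.1, ⟨q, ⟨hq, rfl⟩, rfl⟩, rfl⟩
  · rintro ⟨_, ⟨q, ⟨hq, rfl⟩, rfl⟩, rfl⟩
    exact ⟨_, ⟨⟨q, hq, rfl⟩, rfl⟩, rfl⟩

lemma rowS_KC_eq_iff {S : Finset (ℤ × ℤ)} {y y' : ℤ} :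
    rowS (KC S) y = rowS (KC S) y' ↔ rowS S y = rowS S y' := by
  refine ⟨fun h => ?_, fun h => by rw [rowS_KC, rowS_KC, h]⟩
  have hsub : ∀ {y y'}, rowS (KC S) y = rowS (KC S) y' → rowS S y ⊆ rowS S y' := by
    intro y y' h x hx
    have hφ : (phiC S x : ℤ) ∈ rowS (KC S) y' := by
      rw [← h, rowS_KC]
      exact mem_image_of_mem _ hx
    rw [rowS_KC] at hφ
    obtain ⟨x'', hx'', hφx⟩ := mem_image.1 hφ
    rw [mem_rowS] at hx hx''
    have hcol : colS S x'' = colS S x :=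
      colS_eq_of_phiC_eq (xmin_le_of_mem hx'') (xmin_le_of_mem hx) (by exact_mod_cast hφx)
    simpa [← mem_colS, hcol] using hx''
  exact (hsub h).antisymm (hsub h.symm)

lemma ymin_KC (S : Finset (ℤ × ℤ)) : ymin (KC S) = ymin S := by
  simp only [ymin, KC, image_image]
  rfl

lemma phiR_KC (S : Finset (ℤ × ℤ)) : phiR (KC S) = phiR S := by
  ext y
  simp only [phiR, ymin_KC, ne_eq, rowS_KC_eq_iff]

lemma phiC_KR (S : Finset (ℤ × ℤ)) : phiC (KR S) = phiC S := by
  rw [KR_eq_transposeSh_KC, phiC_transposeSh, phiR_KC, phiR_transposeSh]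

theorem baseline_unique_general (S : Finset (ℤ × ℤ)) :
    KR (KC S) = KC (KR S) := by
  have hRC : KR (KC S) = S.image fun p => ((phiC S p.1 : ℤ), (phiR S p.2 : ℤ)) := by
    rw [KR, phiR_KC, KC, image_image]
    rfl
  have hCR : KC (KR S) = S.image fun p => ((phiC S p.1 : ℤ), (phiR S p.2 : ℤ)) := by
    rw [KC, phiC_KR, KR, image_image]
    rfl
  rw [hRC, hCR]

/-- uniqueness of the baseline shape: compressing columns first and
then rows yields the same shape as compressing rows first and then columns. -/
theorem baseline_unique (S : Finset (ℤ × ℤ)) (hS : S.Nonempty)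
    (hconn : ShapeConnected S) :
    KR (KC S) = KC (KR S) :=
  baseline_unique_general S
end

section
/- Compression preserves connectivity: if a shape S is connected, then the column compression K_C(S), the row compression K_R(S), and the baseline B(S) are connected shapes. -/
/-! The counting function `φ_S` grows by at most one from a column to the next, so the map
`(x, y) ↦ (φ_S x, y)` sends adjacent cells to equal or adjacent cells and hence paths in `S` to
paths in `K_C(S)`; the same holds for rows, and the baseline is a row compression of a column
compression. -/

theorem Finset.natAbs_card_filter_Icc_succ_sub_le (p : ℤ → Prop) [DecidablePred p] (a x : ℤ) :
    (((Finset.Icc a (x + 1)).filter p).card - ((Finset.Icc a x).filter p).card : ℤ).natAbs ≤ 1 := by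
  have hmono : ((Finset.Icc a x).filter p).card ≤ ((Finset.Icc a (x + 1)).filter p).card :=
    Finset.card_le_card (Finset.filter_subset_filter _ (Finset.Icc_subset_Icc_right (by omega)))
  have hsub : Finset.Icc a (x + 1) ⊆ insert (x + 1) (Finset.Icc a x) := by
    intro z hz
    rw [Finset.mem_insert, Finset.mem_Icc] at *
    omega
  have hstep : ((Finset.Icc a (x + 1)).filter p).card ≤ ((Finset.Icc a x).filter p).card + 1 :=
    calc ((Finset.Icc a (x + 1)).filter p).card
        ≤ ((insert (x + 1) (Finset.Icc a x)).filter p).card :=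
          Finset.card_le_card (Finset.filter_subset_filter _ hsub)
      _ ≤ (insert (x + 1) ((Finset.Icc a x).filter p)).card := by
          rw [Finset.filter_insert]
          split_ifs
          · exact le_rfl
          · exact Finset.card_le_card (Finset.subset_insert _ _)
      _ ≤ ((Finset.Icc a x).filter p).card + 1 := Finset.card_insert_le _ _
  omega

theorem natAbs_phiC_succ_sub_le (S : Finset (ℤ × ℤ)) (x : ℤ) :
    ((phiC S (x + 1) : ℤ) - phiC S x).natAbs ≤ 1 :=
  Finset.natAbs_card_filter_Icc_succ_sub_le _ _ _

theorem natAbs_phiR_succ_sub_le (S : Finset (ℤ × ℤ)) (y : ℤ) :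
    ((phiR S (y + 1) : ℤ) - phiR S y).natAbs ≤ 1 :=
  Finset.natAbs_card_filter_Icc_succ_sub_le _ _ _

theorem natAbs_sub_le_of_natAbs_succ_sub_le {g : ℤ → ℤ} (hg : ∀ x, (g (x + 1) - g x).natAbs ≤ 1)
    {x x' : ℤ} (hxx' : (x - x').natAbs ≤ 1) : (g x - g x').natAbs ≤ (x - x').natAbs := by
  rcases (by omega : x = x' ∨ x = x' + 1 ∨ x' = x + 1) with rfl | rfl | rfl
  · simp
  · have := hg x'
    omega
  · have := hg x
    omega

theorem Adj.map_eq_or_adj {g₁ g₂ : ℤ → ℤ} (hg₁ : ∀ x, (g₁ (x + 1) - g₁ x).natAbs ≤ 1)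
    (hg₂ : ∀ y, (g₂ (y + 1) - g₂ y).natAbs ≤ 1) {a b : ℤ × ℤ} (hab : Adj a b) :
    (g₁ a.1, g₂ a.2) = (g₁ b.1, g₂ b.2) ∨ Adj (g₁ a.1, g₂ a.2) (g₁ b.1, g₂ b.2) := by
  unfold Adj at *
  have h₁ := natAbs_sub_le_of_natAbs_succ_sub_le hg₁ (x := a.1) (x' := b.1) (by omega)
  have h₂ := natAbs_sub_le_of_natAbs_succ_sub_le hg₂ (x := a.2) (x' := b.2) (by omega)
  rcases (by omega : (g₁ a.1 = g₁ b.1 ∧ g₂ a.2 = g₂ b.2) ∨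
      (g₁ a.1 - g₁ b.1).natAbs + (g₂ a.2 - g₂ b.2).natAbs = 1) with ⟨e₁, e₂⟩ | hadj
  · exact .inl (by rw [e₁, e₂])
  · exact .inr hadj

theorem ShapeConnected.image {S : Finset (ℤ × ℤ)} (hS : ShapeConnected S) {f : ℤ × ℤ → ℤ × ℤ}
    (hf : ∀ a ∈ S, ∀ b ∈ S, Adj a b → f a = f b ∨ Adj (f a) (f b)) :
    ShapeConnected (S.image f) := by
  have hpath : ∀ a b, Relation.ReflTransGen (fun u v => u ∈ S ∧ v ∈ S ∧ Adj u v) a b →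
      Relation.ReflTransGen (fun u v => u ∈ S.image f ∧ v ∈ S.image f ∧ Adj u v) (f a) (f b) := by
    intro a b hab
    induction hab with
    | refl => exact .refl
    | tail _ hstep ih =>
      obtain ⟨hb, hc, hadj⟩ := hstep
      rcases hf _ hb _ hc hadj with heq | hadj'
      · rwa [← heq]
      · exact ih.tail ⟨Finset.mem_image_of_mem f hb, Finset.mem_image_of_mem f hc, hadj'⟩
  rintro _ hu _ hv
  obtain ⟨a, ha, rfl⟩ := Finset.mem_image.mp hu
  obtain ⟨b, hb, rfl⟩ := Finset.mem_image.mp hv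
  exact hpath a b (hS a ha b hb)

theorem ShapeConnected.KC {S : Finset (ℤ × ℤ)} (hS : ShapeConnected S) :
    ShapeConnected (KC S) :=
  hS.image fun _ _ _ _ hab =>
    hab.map_eq_or_adj (g₁ := fun x => phiC S x) (g₂ := id) (natAbs_phiC_succ_sub_le S) (by simp)

theorem ShapeConnected.KR {S : Finset (ℤ × ℤ)} (hS : ShapeConnected S) :
    ShapeConnected (KR S) :=
  hS.image fun _ _ _ _ hab =>
    hab.map_eq_or_adj (g₁ := id) (g₂ := fun y => phiR S y) (by simp) (natAbs_phiR_succ_sub_le S)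

/-- compression preserves connectivity: the column compression, the row
compression and the baseline of a connected shape are connected shapes. -/
theorem compression_preserves_connectivity (S : Finset (ℤ × ℤ)) (hS : S.Nonempty)
    (hconn : ShapeConnected S) :
    ((KC S).Nonempty ∧ ShapeConnected (KC S)) ∧
      ((KR S).Nonempty ∧ ShapeConnected (KR S)) ∧
      ((Baseline S).Nonempty ∧ ShapeConnected (Baseline S)) :=
  ⟨⟨hS.image _, hconn.KC⟩, ⟨hS.image _, hconn.KR⟩, ⟨(hS.image _).image _, hconn.KC.KR⟩⟩
end
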